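/- Let X and Y be Polish spaces, P ∈ P(X), ε ≥ 0, and f : X → Y a surjective Borel map with Borel right inverse g : Y → X (i.e., f ∘ g = id_Y). Let c : X × X → [0,∞] be a Borel transportation cost satisfying c(g(f(x₁)), g(f(x₂))) ≤ c(x₁, x₂) for all x₁, x₂ ∈ X. Then f_# B_ε^c(P) ⊆ B_ε^{c∘(g×g)}(f_#P), where c∘(g×g) is the cost (y₁,y₂) ↦ c(g(y₁), g(y₂)) on Y. Moreover, if c(g(f(x₁)), g(f(x₂))) = c(x₁, x₂) for all x₁, x₂ ∈ X, then f_# B_ε^c(P) = B_ε^{c∘(g×g)}(f_#P). -/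

import Mathlib

open MeasureTheory
open scoped ENNReal

noncomputable section

/-- The set of couplings of two measures. -/
def couplings {X : Type*} [MeasurableSpace X] (P Q : Measure X) :
    Set (Measure (X × X)) :=
  {γ | IsProbabilityMeasure γ ∧ γ.map Prod.fst = P ∧ γ.map Prod.snd = Q}

/-- Optimal transport discrepancy with transportation cost `c`. -/
def OTCost {X : Type*} [MeasurableSpace X] (c : X × X → ℝ≥0∞) (P Q : Measure X) : ℝ≥0∞ :=
  ⨅ γ ∈ couplings P Q, ∫⁻ x, c x ∂γ

/-- The optimal transport ambiguity set of radius `ε` around `P`, for cost `c`. -/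
def ambiguitySet {X : Type*} [MeasurableSpace X] (c : X × X → ℝ≥0∞) (ε : ℝ≥0∞)
    (P : Measure X) : Set (Measure X) :=
  {Q | IsProbabilityMeasure Q ∧ OTCost c P Q ≤ ε}

/-! Pushing a coupling of `P` and `Q` forward by `f × f` couples `f#P` and `f#Q`, and the
compatibility condition makes the transported cost no larger. Conversely, a coupling `γ` of `f#P`
and `Q'` is lifted to `X` by gluing `P` to it along `f`: with `κ` the conditional kernel of `γ`
given its first coordinate, `P ⊗ (κ ∘ f)` is a measure on `X × Y` whose image under `f × id` is
`γ`. Sending its second coordinate through `g` couples `P` with `g#Q'`, and if `c` is invariant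
under `x ↦ g (f x)` this coupling has the same cost as `γ`. Finally `f#(g#Q') = Q'` as
`f ∘ g = id`. -/

open ProbabilityTheory

section

variable {X Y Z : Type*} [MeasurableSpace X] [MeasurableSpace Y] [MeasurableSpace Z]

lemma MeasureTheory.Measure.map_prodMap_compProd_comap (P : Measure X) [SFinite P] (κ : Kernel Y Z)
    [IsSFiniteKernel κ] {f : X → Y} (hf : Measurable f) :
    (P ⊗ₘ κ.comap f hf).map (Prod.map f id) = P.map f ⊗ₘ κ := by
  ext s hs
  rw [Measure.map_apply (hf.prodMap measurable_id) hs,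
    Measure.compProd_apply (hf.prodMap measurable_id hs), Measure.compProd_apply hs,
    lintegral_map (κ.measurable_kernel_prodMk_left hs) hf]
  rfl

lemma map_prodMap_mem_couplings {P Q : Measure X} {γ : Measure (X × X)} (hγ : γ ∈ couplings P Q)
    {f : X → Y} (hf : Measurable f) :
    γ.map (Prod.map f f) ∈ couplings (P.map f) (Q.map f) := by
  obtain ⟨hγ, rfl, rfl⟩ := hγ
  refine ⟨Measure.isProbabilityMeasure_map (hf.prodMap hf).aemeasurable, ?_, ?_⟩
  · rw [Measure.map_map measurable_fst (hf.prodMap hf), Measure.map_map hf measurable_fst]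
    rfl
  · rw [Measure.map_map measurable_snd (hf.prodMap hf), Measure.map_map hf measurable_snd]
    rfl

lemma OTCost_map_le {c : X × X → ℝ≥0∞} {d : Y × Y → ℝ≥0∞} (hd : Measurable d) {f : X → Y}
    (hf : Measurable f) (hdc : ∀ x₁ x₂, d (f x₁, f x₂) ≤ c (x₁, x₂)) (P Q : Measure X) :
    OTCost d (P.map f) (Q.map f) ≤ OTCost c P Q :=
  le_iInf₂ fun γ hγ => iInf₂_le_of_le _ (map_prodMap_mem_couplings hγ hf) <| by
    rw [lintegral_map hd (hf.prodMap hf)]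
    exact lintegral_mono fun x => hdc x.1 x.2

lemma map_mem_ambiguitySet_map {c : X × X → ℝ≥0∞} {d : Y × Y → ℝ≥0∞} (hd : Measurable d)
    {f : X → Y} (hf : Measurable f) (hdc : ∀ x₁ x₂, d (f x₁, f x₂) ≤ c (x₁, x₂)) {ε : ℝ≥0∞}
    {P Q : Measure X} (hQ : Q ∈ ambiguitySet c ε P) :
    Q.map f ∈ ambiguitySet d ε (P.map f) :=
  have := hQ.1
  ⟨Measure.isProbabilityMeasure_map hf.aemeasurable, (OTCost_map_le hd hf hdc P Q).trans hQ.2⟩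

section StandardBorel

variable [StandardBorelSpace Y]

section Gluing

variable [Nonempty Y]

def glueCoupling (P : Measure X) {f : X → Y} (hf : Measurable f) (γ : Measure (Y × Y))
    [IsFiniteMeasure γ] : Measure (X × Y) :=
  P ⊗ₘ γ.condKernel.comap f hf

instance (P : Measure X) [IsProbabilityMeasure P] {f : X → Y} (hf : Measurable f)
    (γ : Measure (Y × Y)) [IsFiniteMeasure γ] : IsProbabilityMeasure (glueCoupling P hf γ) := by
  unfold glueCoupling
  infer_instance

variable {P : Measure X} [IsProbabilityMeasure P] {f : X → Y} (hf : Measurable f)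
  {γ : Measure (Y × Y)} [IsFiniteMeasure γ]

lemma map_prodMap_glueCoupling (hγ : γ.map Prod.fst = P.map f) :
    (glueCoupling P hf γ).map (Prod.map f id) = γ := by
  rw [glueCoupling, Measure.map_prodMap_compProd_comap P _ hf, ← hγ]
  exact γ.disintegrate γ.condKernel

lemma map_prodMap_id_glueCoupling_mem_couplings {Q : Measure Y} (hγ : γ ∈ couplings (P.map f) Q)
    {g : Y → X} (hg : Measurable g) :
    (glueCoupling P hf γ).map (Prod.map id g) ∈ couplings P (Q.map g) := by
  obtain ⟨_, hγ₁, hγ₂⟩ := hγ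
  refine ⟨Measure.isProbabilityMeasure_map (measurable_id.prodMap hg).aemeasurable, ?_, ?_⟩
  · rw [Measure.map_map measurable_fst (measurable_id.prodMap hg)]
    exact Measure.fst_compProd P _
  · rw [Measure.map_map measurable_snd (measurable_id.prodMap hg), ← hγ₂,
      Measure.map_map hg measurable_snd]
    conv_rhs => rw [← map_prodMap_glueCoupling hf hγ₁]
    rw [Measure.map_map (hg.comp measurable_snd) (hf.prodMap measurable_id)]
    rfl

end Gluing

lemma OTCost_map_right_le {c : X × X → ℝ≥0∞} {d : Y × Y → ℝ≥0∞} (hc : Measurable c)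
    (hd : Measurable d) {f : X → Y} (hf : Measurable f) {g : Y → X} (hg : Measurable g)
    (hcd : ∀ x y, c (x, g y) ≤ d (f x, y)) (P : Measure X) [IsProbabilityMeasure P]
    (Q : Measure Y) : OTCost c P (Q.map g) ≤ OTCost d (P.map f) Q := by
  refine le_iInf₂ fun γ hγ => ?_
  have := hγ.1
  have : Nonempty Y := (nonempty_of_isProbabilityMeasure γ).map Prod.fst
  refine iInf₂_le_of_le _ (map_prodMap_id_glueCoupling_mem_couplings hf hγ hg) ?_
  calc ∫⁻ z, c z ∂(glueCoupling P hf γ).map (Prod.map id g)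
      = ∫⁻ z, c (z.1, g z.2) ∂glueCoupling P hf γ := lintegral_map hc (measurable_id.prodMap hg)
    _ ≤ ∫⁻ z, d (f z.1, z.2) ∂glueCoupling P hf γ := lintegral_mono fun z => hcd z.1 z.2
    _ = ∫⁻ y, d y ∂(glueCoupling P hf γ).map (Prod.map f id) :=
      (lintegral_map hd (hf.prodMap measurable_id)).symm
    _ = ∫⁻ y, d y ∂γ := by rw [map_prodMap_glueCoupling hf hγ.2.1]

lemma map_mem_ambiguitySet_of_mem_map {c : X × X → ℝ≥0∞} {d : Y × Y → ℝ≥0∞}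
    (hc : Measurable c) (hd : Measurable d) {f : X → Y} (hf : Measurable f) {g : Y → X}
    (hg : Measurable g) (hcd : ∀ x y, c (x, g y) ≤ d (f x, y)) {ε : ℝ≥0∞} {P : Measure X}
    [IsProbabilityMeasure P] {Q : Measure Y} (hQ : Q ∈ ambiguitySet d ε (P.map f)) :
    Q.map g ∈ ambiguitySet c ε P :=
  have := hQ.1
  ⟨Measure.isProbabilityMeasure_map hg.aemeasurable,
    (OTCost_map_right_le hc hd hf hg hcd P Q).trans hQ.2⟩

end StandardBorel

end

theorem pushforward_ambiguity_surjective_compatible_general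
    {X Y : Type*}
    [MeasurableSpace X]
    [MeasurableSpace Y] [TopologicalSpace Y] [PolishSpace Y] [BorelSpace Y]
    (P : Measure X) [IsProbabilityMeasure P] (ε : ℝ≥0∞)
    (f : X → Y) (hf : Measurable f)
    (g : Y → X) (hg : Measurable g) (hfg : ∀ y, f (g y) = y)
    (c : X × X → ℝ≥0∞) (hc : Measurable c)
    (hle : ∀ x₁ x₂ : X, c (g (f x₁), g (f x₂)) ≤ c (x₁, x₂)) :
    (fun μ => μ.map f) '' ambiguitySet c ε P
        ⊆ ambiguitySet (fun y => c (g y.1, g y.2)) ε (P.map f)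
      ∧ ((∀ x₁ x₂ : X, c (g (f x₁), g (f x₂)) = c (x₁, x₂)) →
          (fun μ => μ.map f) '' ambiguitySet c ε P
            = ambiguitySet (fun y => c (g y.1, g y.2)) ε (P.map f)) := by
  have hd : Measurable fun y : Y × Y => c (g y.1, g y.2) := hc.comp (hg.prodMap hg)
  have push_subset : (fun μ => μ.map f) '' ambiguitySet c ε P
      ⊆ ambiguitySet (fun y => c (g y.1, g y.2)) ε (P.map f) :=
    Set.image_subset_iff.2 fun _ hQ => map_mem_ambiguitySet_map hd hf hle hQ
  refine ⟨push_subset, fun heq => push_subset.antisymm fun Q hQ => ⟨Q.map g, ?_, ?_⟩⟩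
  · refine map_mem_ambiguitySet_of_mem_map hc hd hf hg (fun x y => ?_) hQ
    rw [← heq x (g y), hfg]
  · show (Q.map g).map f = Q
    rw [Measure.map_map hf hg, Function.LeftInverse.comp_eq_id hfg, Measure.map_id]

/-- Propagation of OT ambiguity sets under a surjective Borel map with Borel right inverse,
under the compatibility condition `c ∘ (g × g) ∘ (f × f) ≤ c`; exactness under equality. -/
theorem pushforward_ambiguity_surjective_compatible
    {X Y : Type*}
    [MeasurableSpace X] [TopologicalSpace X] [PolishSpace X] [BorelSpace X]
    [MeasurableSpace Y] [TopologicalSpace Y] [PolishSpace Y] [BorelSpace Y]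
    (P : Measure X) [IsProbabilityMeasure P] (ε : ℝ≥0∞)
    (f : X → Y) (hf : Measurable f) (hsurj : Function.Surjective f)
    (g : Y → X) (hg : Measurable g) (hfg : ∀ y, f (g y) = y)
    (c : X × X → ℝ≥0∞) (hc : Measurable c)
    (hle : ∀ x₁ x₂ : X, c (g (f x₁), g (f x₂)) ≤ c (x₁, x₂)) :
    (fun μ => μ.map f) '' ambiguitySet c ε P
        ⊆ ambiguitySet (fun y => c (g y.1, g y.2)) ε (P.map f)
      ∧ ((∀ x₁ x₂ : X, c (g (f x₁), g (f x₂)) = c (x₁, x₂)) →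
          (fun μ => μ.map f) '' ambiguitySet c ε P
            = ambiguitySet (fun y => c (g y.1, g y.2)) ε (P.map f)) :=
  pushforward_ambiguity_surjective_compatible_general P ε f hf g hg hfg c hc hle
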